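/- arXiv:math/0605483 — 2 statements merged into one kernel-verified Lean document; each statement's English description precedes it below -/
import Mathlib

section
/- In the weighted projective space P = ℙⁿ(q₀,…,qₙ) with q₀ = gcd(q₁,…,qₙ) = 1, a Weil divisor D = Σⱼ aⱼ Dⱼ of degree d = Σⱼ qⱼ aⱼ is Cartier if and only if m divides d, where m = lcm(q₁,…,qₙ). Concretely (lattice formulation): with lattice N generated by fⱼ = eⱼ/qⱼ (j=1,…,n) in ℝⁿ, e₀ = −Σⱼ eⱼ, and dual lattice M, there exist elements u_k ∈ M for k = 0,…,n satisfying ⟨u_k, fⱼ⟩ = −aⱼ for all j ≠ k, if and only if m | d. -/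
/-- The pairing ⟨u, fⱼ⟩ where f₀ = -∑ eᵢ and fⱼ = eⱼ/qⱼ for j ≥ 1, for a covector
u ∈ (ℝⁿ)* written in the standard dual basis. -/
noncomputable def pairF (n : ℕ) (q : Fin (n + 1) → ℕ) (u : Fin n → ℝ) : Fin (n + 1) → ℝ :=
  Fin.cases (-∑ i, u i) (fun i => u i / (q i.succ : ℝ))

/-- In the weighted projective space ℙⁿ(q₀,…,qₙ) with q₀ = gcd(q₁,…,qₙ) = 1, a Weil
divisor with data (a₀,…,aₙ) of degree d = ∑ qⱼaⱼ is Cartier — i.e. for each maximal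
cone σ̂ₖ there is uₖ in the dual lattice M with ⟨uₖ, fⱼ⟩ = −aⱼ for all j ≠ k — if and
only if m = lcm(q₁,…,qₙ) divides d. (u ∈ M iff each coordinate uᵢ is an integer
multiple of q_{i+1}, since M is spanned by the dual basis fⱼ* = qⱼ eⱼ*.) -/
theorem stmt7 (n : ℕ) (hn : 1 ≤ n) (q : Fin (n + 1) → ℕ) (hq : ∀ j, 0 < q j)
    (hq0 : q 0 = 1) (hgcd : Finset.univ.gcd (fun i : Fin n => q i.succ) = 1)
    (a : Fin (n + 1) → ℤ) (d : ℤ) (hd : d = ∑ j, (q j : ℤ) * a j)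
    (m : ℕ) (hm : m = Finset.univ.lcm (fun i : Fin n => q i.succ)) :
    (∀ k : Fin (n + 1), ∃ u : Fin n → ℝ,
        (∀ i : Fin n, ∃ z : ℤ, u i = (z : ℝ) * (q i.succ : ℝ)) ∧
        ∀ j : Fin (n + 1), j ≠ k → pairF n q u j = -(a j : ℝ)) ↔ (m : ℤ) ∣ d := by
  have hq' : ∀ i : Fin n, (q i.succ : ℝ) ≠ 0 := fun i => Nat.cast_ne_zero.2 (hq _).ne'
  have hdr : (d : ℝ) = (a 0 : ℝ) + ∑ i : Fin n, (q i.succ : ℝ) * (a i.succ : ℝ) := by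
    rw [hd]
    push_cast
    rw [Fin.sum_univ_succ, hq0]
    push_cast
    ring
  constructor
  · intro H
    have key : ∀ i : Fin n, (q i.succ : ℤ) ∣ d := by
      intro i
      obtain ⟨u, hz, hp⟩ := H i.succ
      obtain ⟨z, hzi⟩ := hz i
      have h0 : (∑ j, u j) = (a 0 : ℝ) := by
        have h := hp 0 (Fin.succ_ne_zero i).symm
        simp only [pairF, Fin.cases_zero] at h
        linarith
      have hoth : ∀ j : Fin n, j ≠ i → u j = -(a j.succ : ℝ) * (q j.succ : ℝ) := by
        intro j hj
        have h := hp j.succ (fun hh => hj (Fin.succ_injective n hh))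
        simp only [pairF, Fin.cases_succ] at h
        rw [div_eq_iff (hq' j)] at h
        linarith
      have hsum : ∑ j, u j = u i + ∑ j ∈ Finset.univ.erase i, u j :=
        (Finset.add_sum_erase _ _ (Finset.mem_univ i)).symm
      have hsum2 : ∑ j ∈ Finset.univ.erase i, u j
          = ∑ j ∈ Finset.univ.erase i, (-(a j.succ : ℝ) * (q j.succ : ℝ)) :=
        Finset.sum_congr rfl (fun j hj => hoth j (Finset.ne_of_mem_erase hj))
      have hsplit : (∑ j : Fin n, (q j.succ : ℝ) * (a j.succ : ℝ))
          = (q i.succ : ℝ) * (a i.succ : ℝ)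
            + ∑ j ∈ Finset.univ.erase i, (q j.succ : ℝ) * (a j.succ : ℝ) :=
        (Finset.add_sum_erase _ _ (Finset.mem_univ i)).symm
      have hcancel : (∑ j ∈ Finset.univ.erase i, (-(a j.succ : ℝ) * (q j.succ : ℝ)))
          + ∑ j ∈ Finset.univ.erase i, (q j.succ : ℝ) * (a j.succ : ℝ) = 0 := by
        rw [← Finset.sum_add_distrib]
        apply Finset.sum_eq_zero
        intro j _
        ring
      have hd' : (d : ℝ) = ((z : ℝ) + (a i.succ : ℝ)) * (q i.succ : ℝ) := by
        rw [hdr, ← h0, hsum, hsum2, hzi, hsplit]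
        linear_combination hcancel
      refine ⟨z + a i.succ, ?_⟩
      have : (d : ℝ) = (((q i.succ : ℤ) * (z + a i.succ) : ℤ) : ℝ) := by
        push_cast
        linarith
      exact_mod_cast this
    have hlcm : (Finset.univ.lcm fun i : Fin n => q i.succ) ∣ d.natAbs := by
      apply Finset.lcm_dvd
      intro i _
      have h := Int.natAbs_dvd_natAbs.mpr (key i)
      simpa using h
    rw [← Int.natAbs_dvd_natAbs]
    simpa [hm] using hlcm
  · intro hdvd k
    have hkd : ∀ i : Fin n, (q i.succ : ℤ) ∣ d := by
      intro i
      refine dvd_trans ?_ hdvd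
      exact_mod_cast Int.natCast_dvd_natCast.mpr (hm ▸ Finset.dvd_lcm (Finset.mem_univ i))
    rcases Fin.eq_zero_or_eq_succ k with rfl | ⟨i₀, rfl⟩
    · refine ⟨fun i => -(a i.succ : ℝ) * (q i.succ : ℝ),
        fun i => ⟨-a i.succ, by push_cast; ring⟩, ?_⟩
      intro j hj
      obtain ⟨j', rfl⟩ : ∃ j', j = j'.succ := ⟨j.pred hj, (Fin.succ_pred _ _).symm⟩
      simp only [pairF, Fin.cases_succ]
      rw [neg_mul, neg_div, mul_div_assoc, div_self (hq' j'), mul_one]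
    · obtain ⟨c, hc⟩ := hkd i₀
      refine ⟨fun i => if i = i₀ then ((d : ℝ) - (a i₀.succ : ℝ) * (q i₀.succ : ℝ))
          else -(a i.succ : ℝ) * (q i.succ : ℝ), ?_, ?_⟩
      · intro i
        by_cases h : i = i₀
        · subst h
          refine ⟨c - a i.succ, ?_⟩
          dsimp only
          rw [if_pos rfl, hc]
          push_cast
          ring
        · exact ⟨-a i.succ, by dsimp only; rw [if_neg h]; push_cast; ring⟩
      · intro j hj
        rcases Fin.eq_zero_or_eq_succ j with rfl | ⟨j', rfl⟩
        · simp only [pairF, Fin.cases_zero]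
          have hsum : ∑ i : Fin n, (if i = i₀ then ((d : ℝ) - (a i₀.succ : ℝ) * (q i₀.succ : ℝ))
              else -(a i.succ : ℝ) * (q i.succ : ℝ))
              = ((d : ℝ) - (a i₀.succ : ℝ) * (q i₀.succ : ℝ))
                + ∑ i ∈ Finset.univ.erase i₀, (-(a i.succ : ℝ) * (q i.succ : ℝ)) := by
            rw [← Finset.add_sum_erase _ _ (Finset.mem_univ i₀), if_pos rfl]
            congr 1
            apply Finset.sum_congr rfl
            intro i hi
            rw [if_neg (Finset.ne_of_mem_erase hi)]
          have hsplit : (∑ i : Fin n, (q i.succ : ℝ) * (a i.succ : ℝ))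
              = (q i₀.succ : ℝ) * (a i₀.succ : ℝ)
                + ∑ i ∈ Finset.univ.erase i₀, (q i.succ : ℝ) * (a i.succ : ℝ) :=
            (Finset.add_sum_erase _ _ (Finset.mem_univ i₀)).symm
          have hcancel : (∑ i ∈ Finset.univ.erase i₀, (-(a i.succ : ℝ) * (q i.succ : ℝ)))
              + ∑ i ∈ Finset.univ.erase i₀, (q i.succ : ℝ) * (a i.succ : ℝ) = 0 := by
            rw [← Finset.sum_add_distrib]
            apply Finset.sum_eq_zero
            intro i _
            ring
          rw [hsum]
          linear_combination -hdr - hsplit - hcancel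
        · have hj' : j' ≠ i₀ := fun h => hj (by rw [h])
          simp only [pairF, Fin.cases_succ, if_neg hj']
          rw [neg_mul, neg_div, mul_div_assoc, div_self (hq' j'), mul_one]
end

section
/- In the fan of weighted projective space ℙⁿ(q₀,…,qₙ) described above, a divisor D of degree d is ample if and only if d > 0; specifically, the support-function ampleness criterion reduces to ψ_D(f₀ + f₁ + ⋯ + fₙ) − Σⱼ ψ_D(fⱼ) = d / max{q₀,…,qₙ} > 0 for the unique primitive collection {f₀,…,fₙ}. Prove the identity: if ψ_D is the piecewise linear function on ℝⁿ determined by ψ_D(fⱼ) = −aⱼ that is linear on each maximal cone, then, since f₀+⋯+fₙ = 0 plus the cone structure forces evaluation in the cone missing the index j₀ achieving max qⱼ, the displayed quantity equals d / max{q₀,…,qₙ}. -/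
/-- Ampleness criterion computation for ℙⁿ(q₀,…,qₙ): if u is the linear functional
giving ψ_D on the maximal cone σ̂_{j₀} missing the index j₀ achieving max qⱼ, i.e.
⟨u, fⱼ⟩ = −aⱼ for all j ≠ j₀, then
ψ_D(f₀ + ⋯ + fₙ) − ∑ⱼ ψ_D(fⱼ) = ⟨u, ∑ⱼ fⱼ⟩ − ∑ⱼ(−aⱼ) = d / max{q₀,…,qₙ}. -/
theorem stmt9 (n : ℕ) (hn : 1 ≤ n) (q : Fin (n + 1) → ℕ) (hq : ∀ j, 0 < q j)
    (hq0 : q 0 = 1) (a : Fin (n + 1) → ℤ) (d : ℤ) (hd : d = ∑ j, (q j : ℤ) * a j)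
    (j₀ : Fin (n + 1)) (hj₀ : ∀ j, q j ≤ q j₀)
    (u : Fin n → ℝ) (hu : ∀ j : Fin (n + 1), j ≠ j₀ → pairF n q u j = -(a j : ℝ)) :
    (∑ j, pairF n q u j) - (∑ j, -(a j : ℝ)) = (d : ℝ) / (q j₀ : ℝ) := by
  have hqR : ∀ j, ((q j : ℝ)) ≠ 0 := fun j => by
    exact_mod_cast (hq j).ne'
  have hdR : (d : ℝ) = ∑ j, (q j : ℝ) * (a j : ℝ) := by
    rw [hd]; push_cast; ring
  have key : (∑ j, pairF n q u j) - (∑ j, -(a j : ℝ)) = pairF n q u j₀ + (a j₀ : ℝ) := by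
    rw [← Finset.sum_sub_distrib, Finset.sum_eq_single j₀]
    · ring
    · intro j _ hj; rw [hu j hj]; ring
    · intro h; exact absurd (Finset.mem_univ j₀) h
  rw [key]
  induction j₀ using Fin.cases with
  | zero =>
    have hui : ∀ i : Fin n, u i = -((q i.succ : ℝ) * (a i.succ : ℝ)) := by
      intro i
      have h := hu i.succ (Fin.succ_ne_zero i)
      simp only [pairF, Fin.cases_succ] at h
      rw [div_eq_iff (hqR i.succ)] at h
      linear_combination h
    simp only [pairF, Fin.cases_zero, hq0, Nat.cast_one, div_one]
    rw [hdR, Fin.sum_univ_succ, hq0]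
    simp only [hui, Nat.cast_one]
    push_cast
    ring_nf
    rw [Finset.sum_neg_distrib]
    ring
  | succ k =>
    have h0 : (∑ i, u i) = (a 0 : ℝ) := by
      have h := hu 0 (by exact (Fin.succ_ne_zero k).symm)
      simp only [pairF, Fin.cases_zero] at h
      linarith [h]
    have hui : ∀ i : Fin n, i ≠ k → u i = -((q i.succ : ℝ) * (a i.succ : ℝ)) := by
      intro i hi
      have h := hu i.succ (by simpa [Fin.succ_inj] using hi)
      simp only [pairF, Fin.cases_succ] at h
      rw [div_eq_iff (hqR i.succ)] at h
      linear_combination h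
    simp only [pairF, Fin.cases_succ]
    rw [div_add' _ _ _ (hqR k.succ), div_eq_div_iff (hqR k.succ) (hqR k.succ)]
    have : u k + (a k.succ : ℝ) * (q k.succ : ℝ) =
        ∑ i, (u i + (q i.succ : ℝ) * (a i.succ : ℝ)) := by
      rw [Finset.sum_eq_single k]
      · ring
      · intro i _ hi; rw [hui i hi]; ring
      · intro h; exact absurd (Finset.mem_univ k) h
    rw [this, hdR, Fin.sum_univ_succ, hq0, Finset.sum_add_distrib, h0]
    push_cast
    ring
end
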